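/- arXiv:0707.3914 — 4 statements merged into one kernel-verified Lean document; each statement's English description precedes it below -/
import Mathlib

section
/- Let H be a group, U and U' subgroups of H with U ∩ U' of index two in U, say U = (U ∩ U') ∪ σ(U ∩ U') for some σ ∈ U. Assume that for every N ≥ 1 and every τ_1, …, τ_N ∈ U'σ ∖ U one has τ_1 ⋯ τ_N ≠ 1. Then for any field E the H-equivariant linear map E[H/U] → E[H/U'] sending the class [ξ] to [ξσ] + [ξ] is injective. -/
/-!
Suppose `Φ x = 0` with `x ≠ 0`. For `ξ` with `[ξ] ∈ supp x`, the coefficient of `Φ x` at `ξU'`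
gets the contribution `x_[ξ] ≠ 0` from `[ξ]`, so some other coset `sU ∈ supp x` meets `ξU'`;
then `τ = ξ⁻¹ s σ ∈ U'σ ∖ U` and `[ξτ] = [s] ∈ supp x`. Iterating gives an infinite walk
`ξ₀, ξ₁, …` in the finitely many `(U ∩ U')`-cosets over `supp x` with steps in `U'σ ∖ U`.
Two of its points lie in one `(U ∩ U')`-coset; since `σ` normalises `U ∩ U'`, right
multiplication by `U ∩ U'` preserves `U'σ ∖ U`, so the last step of that loop can be corrected
to make the product of the steps equal to `1`, contradicting the hypothesis on products.
-/
theorem LinearMap.exists_ne_mem_support_apply_single_ne_zero {R α β : Type*} [Semiring R]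
    [NoZeroDivisors R] (Φ : (α →₀ R) →ₗ[R] (β →₀ R)) {x : α →₀ R} (hx : Φ x = 0)
    {a : α} (ha : a ∈ x.support) {b : β} (hb : Φ (Finsupp.single a 1) b ≠ 0) :
    ∃ a' ∈ x.support, a' ≠ a ∧ Φ (Finsupp.single a' 1) b ≠ 0 := by
  by_contra! h
  have hsum : Φ x b = ∑ a' ∈ x.support, x a' * Φ (Finsupp.single a' 1) b := by
    conv_lhs => rw [← Finsupp.sum_single x]
    simp_rw [Finsupp.sum, ← Finsupp.smul_single_one _ (x _), map_sum, map_smul,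
      Finsupp.finsetSum_apply, Finsupp.smul_apply, smul_eq_mul]
  rw [hx, Finset.sum_eq_single a (fun a' ha' hne => by rw [h a' ha' hne, mul_zero])
    (fun h => absurd ha h)] at hsum
  exact mul_ne_zero (Finsupp.mem_support_iff.mp ha) hb hsum.symm

theorem List.prod_ofFn_eq_inv_mul {G : Type*} [Group G] (g : ℕ → G) (m : ℕ) :
    ∀ k, (List.ofFn fun i : Fin k => (g (m + i))⁻¹ * g (m + i + 1)).prod = (g m)⁻¹ * g (m + k)
  | 0 => by simp
  | k + 1 => by
    rw [List.ofFn_succ', List.prod_concat]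
    simp only [Fin.val_castSucc, Fin.val_last, List.prod_ofFn_eq_inv_mul g m k]
    group

theorem exists_prod_ofFn_eq_one_of_forall_exists_mul_mem {G : Type*} [Group G] {K : Subgroup G}
    {A T : Set G} (hA : ((↑) '' A : Set (G ⧸ K)).Finite) (hA₀ : A.Nonempty)
    (hT : ∀ τ ∈ T, ∀ k ∈ K, τ * k ∈ T) (hstep : ∀ g ∈ A, ∃ τ ∈ T, g * τ ∈ A) :
    ∃ (N : ℕ) (τ : Fin (N + 1) → G), (∀ i, τ i ∈ T) ∧ (List.ofFn τ).prod = 1 := by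
  choose! next hnextT hnextA using hstep
  obtain ⟨g₀, hg₀⟩ := hA₀
  set g : ℕ → G := fun n => (fun h => h * next h)^[n] g₀
  have hg_succ (n : ℕ) : g (n + 1) = g n * next (g n) := Function.iterate_succ_apply' _ n g₀
  have hgA (n : ℕ) : g n ∈ A := by
    induction n with
    | zero => exact hg₀
    | succ n ih => rw [hg_succ]; exact hnextA _ ih
  have hgT (n : ℕ) : (g n)⁻¹ * g (n + 1) ∈ T := by
    rw [hg_succ, inv_mul_cancel_left]; exact hnextT _ (hgA n)
  obtain ⟨m, n, hmn, hgmn⟩ := hA.exists_lt_map_eq_of_forall_mem (f := fun n => (g n : G ⧸ K))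
    fun n => Set.mem_image_of_mem _ (hgA n)
  obtain ⟨N, rfl⟩ : ∃ N, n = m + N + 1 := ⟨n - m - 1, by omega⟩
  -- the loop `g m, …, g (m + N + 1)` closes up to `w ∈ K`, which is absorbed by the last step
  set w := (g m)⁻¹ * g (m + N + 1)
  have hw : w ∈ K := QuotientGroup.eq.mp hgmn
  refine ⟨N, Fin.snoc (α := fun _ => G) (fun i : Fin N => (g (m + i))⁻¹ * g (m + i + 1))
    ((g (m + N))⁻¹ * g (m + N + 1) * w⁻¹), fun i => ?_, ?_⟩
  · induction i using Fin.lastCases with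
    | last => simpa only [Fin.snoc_last] using hT _ (hgT _) _ (inv_mem hw)
    | cast i => simpa only [Fin.snoc_castSucc] using hgT _
  · rw [List.ofFn_succ', List.prod_concat]
    simp only [Fin.snoc_castSucc, Fin.snoc_last, List.prod_ofFn_eq_inv_mul, w]
    group

section CosetCover

variable {H : Type*} [Group H] {U U' : Subgroup H} {σ : H}

theorem conj_mem_of_cover (hσU : σ ∈ U) (hσU' : σ ∉ U')
    (hcover : ∀ u ∈ U, u ∈ U ⊓ U' ∨ ∃ v ∈ U ⊓ U', u = σ * v) {k : H} (hk : k ∈ U ⊓ U') :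
    σ * k * σ⁻¹ ∈ U' := by
  rcases hcover _ (mul_mem (mul_mem hσU hk.1) (inv_mem hσU)) with h | ⟨v, hv, he⟩
  · exact h.2
  · refine absurd ?_ hσU'
    have hσ : σ = v⁻¹ * k := by
      rw [mul_assoc, mul_right_inj, mul_inv_eq_iff_eq_mul] at he; rw [he]; group
    rw [hσ]; exact mul_mem (inv_mem hv.2) hk.2

theorem finite_image_mk_preimage_mk_of_cover
    (hcover : ∀ u ∈ U, u ∈ U ⊓ U' ∨ ∃ v ∈ U ⊓ U', u = σ * v) {s : Set (H ⧸ U)} (hs : s.Finite) :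
    ((↑) '' ((↑) ⁻¹' s : Set H) : Set (H ⧸ (U ⊓ U'))).Finite := by
  refine ((hs.image fun q => ((q.out : H) : H ⧸ (U ⊓ U'))).union
    (hs.image fun q => ((q.out * σ : H) : H ⧸ (U ⊓ U')))).subset ?_
  rintro _ ⟨g, hg, rfl⟩
  rcases hcover _ (QuotientGroup.eq.mp (QuotientGroup.out_eq' (g : H ⧸ U))) with h | ⟨v, hv, he⟩
  · exact Or.inl ⟨g, hg, QuotientGroup.eq.mpr h⟩
  · refine Or.inr ⟨g, hg, QuotientGroup.eq.mpr ?_⟩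
    rw [mul_inv_rev, mul_assoc, he, inv_mul_cancel_left]; exact hv

theorem mul_mem_step_of_cover (hσU : σ ∈ U) (hσU' : σ ∉ U')
    (hcover : ∀ u ∈ U, u ∈ U ⊓ U' ∨ ∃ v ∈ U ⊓ U', u = σ * v) {τ k : H}
    (hτ : (∃ v ∈ U', τ = v * σ) ∧ τ ∉ U) (hk : k ∈ U ⊓ U') :
    (∃ v ∈ U', τ * k = v * σ) ∧ τ * k ∉ U := by
  obtain ⟨⟨v, hv, rfl⟩, hτU⟩ := hτ
  refine ⟨⟨v * (σ * k * σ⁻¹), mul_mem hv (conj_mem_of_cover hσU hσU' hcover hk), by group⟩,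
    fun h => hτU ?_⟩
  simpa using mul_mem h (inv_mem hk.1)

end CosetCover

theorem exists_step_mul_mem_support_of_map_eq_zero {H E : Type*} [Group H] [Field E]
    {U U' : Subgroup H} {σ : H} (hσU : σ ∈ U) (hσU' : σ ∉ U')
    {Φ : ((H ⧸ U) →₀ E) →ₗ[E] ((H ⧸ U') →₀ E)}
    (hΦ : ∀ ξ : H, Φ (Finsupp.single (ξ : H ⧸ U) 1) =
      Finsupp.single ((ξ * σ : H) : H ⧸ U') 1 + Finsupp.single ((ξ : H) : H ⧸ U') 1)
    {x : (H ⧸ U) →₀ E} (hx : Φ x = 0) {g : H} (hg : (g : H ⧸ U) ∈ x.support) :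
    ∃ τ : H, ((∃ v ∈ U', τ = v * σ) ∧ τ ∉ U) ∧ ((g * τ : H) : H ⧸ U) ∈ x.support := by
  have hgσ : ((g * σ : H) : H ⧸ U') ≠ g := fun h => hσU' (by simpa using QuotientGroup.eq.mp h)
  obtain ⟨_, hr, hrg, hrΦ⟩ := Φ.exists_ne_mem_support_apply_single_ne_zero hx hg
    (b := (g : H ⧸ U')) (by simp [hΦ, hgσ])
  obtain ⟨r, rfl⟩ := QuotientGroup.mk_surjective ‹H ⧸ U›
  -- `s` is whichever of `r σ`, `r` (both in the coset `r U`) lies in `g U'`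
  suffices ∃ s : H, (s : H ⧸ U) = r ∧ (s : H ⧸ U') = g by
    obtain ⟨s, hsr, hsg⟩ := this
    refine ⟨g⁻¹ * s * σ, ⟨⟨g⁻¹ * s, QuotientGroup.eq.mp hsg.symm, rfl⟩, fun h => hrg ?_⟩, ?_⟩
    · rw [← hsr]; exact (QuotientGroup.eq.mpr (by simpa using mul_mem h (inv_mem hσU))).symm
    · rwa [← mul_assoc, mul_inv_cancel_left, QuotientGroup.mk_mul_of_mem _ hσU, hsr]
  by_contra! h
  have h₁ := h (r * σ) (QuotientGroup.mk_mul_of_mem _ hσU)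
  have h₂ := h r rfl
  simp [hΦ, h₁, h₂] at hrΦ

/-- if `U ∩ U'` has index two in `U`, `U = (U ∩ U') ∪ σ(U ∩ U')`, and no
nonempty product of elements of `U'σ ∖ U` equals `1`, then the `H`-equivariant map
`E[H/U] → E[H/U']`, `[ξ] ↦ [ξσ] + [ξ]`, is injective. -/
theorem stmt_1 {H : Type*} [Group H] (E : Type*) [Field E]
    (U U' : Subgroup H) (σ : H)
    (hσU : σ ∈ U) (hσU' : σ ∉ U')
    (hcover : ∀ u ∈ U, u ∈ U ⊓ U' ∨ ∃ v ∈ U ⊓ U', u = σ * v)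
    (hprod : ∀ (N : ℕ) (τ : Fin (N + 1) → H),
      (∀ i, (∃ v ∈ U', τ i = v * σ) ∧ τ i ∉ U) → (List.ofFn τ).prod ≠ 1)
    (Φ : ((H ⧸ U) →₀ E) →ₗ[E] ((H ⧸ U') →₀ E))
    (hΦ : ∀ ξ : H, Φ (Finsupp.single (ξ : H ⧸ U) 1) =
      Finsupp.single ((ξ * σ : H) : H ⧸ U') 1 + Finsupp.single ((ξ : H) : H ⧸ U') 1) :
    Function.Injective Φ := by
  refine (injective_iff_map_eq_zero Φ).mpr fun x hx => ?_
  by_contra hx₀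
  obtain ⟨q, hq⟩ := Finsupp.support_nonempty_iff.mpr hx₀
  obtain ⟨N, τ, hτ, hτprod⟩ := exists_prod_ofFn_eq_one_of_forall_exists_mul_mem (K := U ⊓ U')
    (A := QuotientGroup.mk ⁻¹' (x.support : Set (H ⧸ U)))
    (T := {τ | (∃ v ∈ U', τ = v * σ) ∧ τ ∉ U})
    (finite_image_mk_preimage_mk_of_cover hcover x.support.finite_toSet)
    ⟨q.out, by simpa using hq⟩
    (fun _ hτ _ hk => mul_mem_step_of_cover hσU hσU' hcover hτ hk)
    (fun _ hg => exists_step_mul_mem_support_of_map_eq_zero hσU hσU' hΦ hx hg)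
  exact hprod N τ hτ hτprod
end

section
/- Let H be a group, U a subgroup, and g_1, …, g_N involutions in the quotient N_H(U)/U (where N_H(U) is the normalizer of U in H) generating an infinite subgroup of N_H(U)/U. Then for any field E the natural H-equivariant map E[H/U] → ⊕_{j=1}^N E[H/⟨U, g_j⟩] (each component induced by the quotient map H/U → H/⟨U,g_j⟩) is injective. -/
/-! If `g` normalizes `U` and `g² ∈ U`, the fibre of `H ⧸ U → H ⧸ (U ⊔ ⟨g⟩)` through `hU`
is `{hU, hgU}`. A pushforward that vanishes cannot have a fibre meeting the support in exactly one
point, so the support of an element of the kernel is stable under right multiplication by every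
`g_j`, hence by the group they generate. A nonempty support would then contain a translate of the
infinite image of that group in `H ⧸ U`. -/

open Subgroup

lemma Finsupp.exists_ne_mem_support_of_mapDomain_eq_zero {α β M : Type*} [AddCommMonoid M]
    {f : α → β} {x : α →₀ M} (hx : x.mapDomain f = 0) {a : α} (ha : a ∈ x.support) :
    ∃ b ∈ x.support, b ≠ a ∧ f b = f a := by
  by_contra! hfib
  have hval : x.mapDomain f (f a) = x a := by
    rw [Finsupp.mapDomain, Finsupp.sum_apply, Finsupp.sum,
      Finset.sum_eq_single a (fun b hb hba => Finsupp.single_eq_of_ne' (hfib b hb hba))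
        (fun ha' => by simp [Finsupp.notMem_support_iff.mp ha']),
      Finsupp.single_eq_same]
  exact Finsupp.mem_support_iff.mp ha (by rw [← hval, hx, Finsupp.zero_apply])

section

variable {H : Type*} [Group H] {U : Subgroup H}

lemma Subgroup.mem_sup_closure_singleton_iff {g : H} (hg : g ∈ normalizer (U : Set H))
    (hg2 : g ^ 2 ∈ U) {v : H} : v ∈ U ⊔ closure {g} ↔ v ∈ U ∨ v * g ∈ U := by
  have heven : ∀ m : ℤ, g ^ (2 * m) ∈ U := fun m => by
    rw [zpow_mul, zpow_two, ← sq]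
    exact zpow_mem hg2 m
  rw [← zpowers_eq_closure, ← SetLike.mem_coe,
    coe_mul_of_right_le_normalizer_left U _ (zpowers_le.2 hg)]
  constructor
  · rintro ⟨u, hu, _, ⟨k, rfl⟩, rfl⟩
    obtain ⟨m, rfl | rfl⟩ := Int.even_or_odd' k
    · exact Or.inl (mul_mem hu (heven m))
    · refine Or.inr ?_
      rw [mul_assoc, ← zpow_add_one, show 2 * m + 1 + 1 = 2 * (m + 1) by ring]
      exact mul_mem hu (heven _)
  · rintro (hv | hv)
    · exact ⟨v, hv, 1, one_mem _, mul_one v⟩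
    · exact ⟨v * g, hv, g⁻¹, inv_mem (mem_zpowers g), by group⟩

lemma QuotientGroup.mk_sup_closure_singleton_eq_iff {g : H} (hg : g ∈ normalizer (U : Set H))
    (hg2 : g ^ 2 ∈ U) {a b : H} :
    (a : H ⧸ (U ⊔ closure {g})) = b ↔ (a : H ⧸ U) = b ∨ (a : H ⧸ U) = ↑(b * g) := by
  rw [QuotientGroup.eq, QuotientGroup.eq, QuotientGroup.eq,
    mem_sup_closure_singleton_iff hg hg2, mul_assoc]

lemma QuotientGroup.mk_mul_mem_support_of_mapDomain_eq_zero {M : Type*} [AddCommMonoid M]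
    {g : H} (hg : g ∈ normalizer (U : Set H)) (hg2 : g ^ 2 ∈ U) {x : H ⧸ U →₀ M}
    (hx : x.mapDomain (quotientMapOfLE (le_sup_left : U ≤ U ⊔ closure {g})) = 0) {h : H}
    (hh : (h : H ⧸ U) ∈ x.support) : ((h * g : H) : H ⧸ U) ∈ x.support := by
  obtain ⟨b, hb, hbh, hfib⟩ := Finsupp.exists_ne_mem_support_of_mapDomain_eq_zero hx hh
  induction b using QuotientGroup.induction_on with | H b =>
  rw [quotientMapOfLE_apply_mk, quotientMapOfLE_apply_mk,
    QuotientGroup.mk_sup_closure_singleton_eq_iff hg hg2] at hfib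
  exact hfib.resolve_left hbh ▸ hb

lemma QuotientGroup.mk_mul_mem_of_mem_closure {s : Set (H ⧸ U)} {S : Set H}
    (hS2 : ∀ t ∈ S, t ^ 2 ∈ U)
    (hS : ∀ t ∈ S, ∀ h : H, (h : H ⧸ U) ∈ s → ((h * t : H) : H ⧸ U) ∈ s)
    {w : H} (hw : w ∈ closure S) {h : H} (hh : (h : H ⧸ U) ∈ s) :
    ((h * w : H) : H ⧸ U) ∈ s := by
  induction hw using closure_induction'' generalizing h with
  | mem t ht => exact hS t ht h hh
  | inv_mem t ht =>
    have hmk : ((h * t⁻¹ : H) : H ⧸ U) = ((h * t : H) : H ⧸ U) := by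
      rw [QuotientGroup.eq, show (h * t⁻¹)⁻¹ * (h * t) = t ^ 2 by rw [sq]; group]
      exact hS2 t ht
    exact hmk ▸ hS t ht h hh
  | one => rwa [mul_one]
  | mul w₁ w₂ _ _ ih₁ ih₂ => exact mul_assoc h w₁ w₂ ▸ ih₂ (ih₁ hh)

lemma Finsupp.eq_zero_of_support_mul_right_stable {M : Type*} [Zero M] {K : Subgroup H}
    (hK : ((QuotientGroup.mk : H → H ⧸ U) '' K).Infinite) {x : H ⧸ U →₀ M}
    (hx : ∀ w ∈ K, ∀ h : H, (h : H ⧸ U) ∈ x.support →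
      ((h * w : H) : H ⧸ U) ∈ x.support) :
    x = 0 := by
  by_contra hx0
  obtain ⟨c, hc⟩ := Finsupp.support_nonempty_iff.mpr hx0
  induction c using QuotientGroup.induction_on with | H h =>
  refine (hK.image (MulAction.injective h).injOn).mono ?_ x.support.finite_toSet
  rintro _ ⟨_, ⟨w, hw, rfl⟩, rfl⟩
  exact hx w hw h hc

end

/-- if `g₁, …, g_N` are involutions in `N_H(U)/U` generating an infinite
subgroup, then the natural map `E[H/U] → ⊕_j E[H/⟨U, g_j⟩]` is injective. -/
theorem stmt_2 {H : Type*} [Group H] (E : Type*) [Field E]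
    (U : Subgroup H) (N : ℕ) (g : Fin N → H)
    (hnorm : ∀ j, g j ∈ Subgroup.normalizer (U : Set H))
    (hinv : ∀ j, (g j) ^ 2 ∈ U)
    (hinf : Set.Infinite ((fun h : H => (h : H ⧸ U)) ''
      ((Subgroup.closure (Set.range g) : Subgroup H) : Set H)))
    (φ : ∀ j : Fin N, H ⧸ U → H ⧸ (U ⊔ Subgroup.closure {g j}))
    (hφ : ∀ j (h : H), φ j (h : H ⧸ U) = (h : H ⧸ (U ⊔ Subgroup.closure {g j}))) :
    Function.Injective (fun x : (H ⧸ U) →₀ E => fun j => Finsupp.mapDomain (φ j) x) := by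
  have hφ_eq : ∀ j, φ j = quotientMapOfLE le_sup_left :=
    fun j => funext fun a => QuotientGroup.induction_on a (hφ j)
  show Function.Injective (LinearMap.pi fun j => Finsupp.lmapDomain E E (φ j))
  refine (injective_iff_map_eq_zero _).mpr fun x hx => ?_
  have hxj : ∀ j, x.mapDomain (quotientMapOfLE (le_sup_left : U ≤ U ⊔ closure {g j})) = 0 :=
    fun j => by
      rw [← hφ_eq j]
      exact congrFun hx j
  refine Finsupp.eq_zero_of_support_mul_right_stable hinf fun w hw h hh => ?_
  refine QuotientGroup.mk_mul_mem_of_mem_closure (Set.forall_mem_range.mpr hinv) ?_ hw hh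
  rintro _ ⟨j, rfl⟩ h' hh'
  exact QuotientGroup.mk_mul_mem_support_of_mapDomain_eq_zero (hnorm j) (hinv j) (hxj j) hh'
end

section
/- Let φ : H₂ → H₁ be a continuous homomorphism of topological groups with dense image. Then the pull-back functor φ* on smooth representations admits a right adjoint φ_* given by φ_*(W) = ⋃_U W^{φ^{-1}(U)}, the union over open subgroups U of H₁, where the H₁-action on φ_*(W) is defined by σ·w := σ'·w for any σ' ∈ H₂ with φ(σ') ∈ σU (U an open subgroup of H₁ fixing w), and this is well defined. In particular, φ* preserves irreducibility of smooth representations. -/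
/-!
If `φ(σ')` and `φ(σ'')` lie in the same coset `σU`, then `σ''⁻¹σ'` lies in `φ⁻¹(U)`, which fixes `w`;
so `σ' • w = σ'' • w`. Density of `φ(H₂)` puts some `φ(τ)` in every open coset `σ(U ∩ U')`, which
makes the value independent of `U` as well. For irreducibility, an `H₂`-stable subgroup `S` is
`H₁`-stable: given `σ` and `x ∈ S`, density puts some `φ(τ)` in the open coset `σ · Stab(x)`, and then
`σ • x = φ(τ) • x ∈ S`.
-/

theorem smul_eq_smul_of_map_mem_coset {H₁ H₂ W : Type*} [Group H₁] [Group H₂] [MulAction H₂ W]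
    (φ : H₂ →* H₁) {U : Subgroup H₁} {w : W}
    (hw : ∀ τ : H₂, φ τ ∈ U → τ • w = w) {σ : H₁} {σ' σ'' : H₂}
    (h' : ∃ u ∈ U, φ σ' = σ * u) (h'' : ∃ u ∈ U, φ σ'' = σ * u) : σ' • w = σ'' • w := by
  obtain ⟨u, hu, hσ'⟩ := h'
  obtain ⟨v, hv, hσ''⟩ := h''
  have hmem : φ (σ''⁻¹ * σ') ∈ U := by
    have : φ (σ''⁻¹ * σ') = v⁻¹ * u := by rw [map_mul, map_inv, hσ', hσ'']; group
    exact this ▸ U.mul_mem (U.inv_mem hv) hu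
  simpa only [mul_smul, inv_smul_eq_iff] using hw _ hmem

theorem DenseRange.exists_eq_mul_mem {α G : Type*} [Group G] [TopologicalSpace G]
    [SeparatelyContinuousMul G] {f : α → G} (hf : DenseRange f) {s : Set G} (hs : IsOpen s)
    (hs₁ : (1 : G) ∈ s) (σ : G) : ∃ a, ∃ u ∈ s, f a = σ * u := by
  obtain ⟨a, u, hu, hfa⟩ := hf.exists_mem_open (hs.leftCoset σ) ⟨σ, 1, hs₁, mul_one σ⟩
  exact ⟨a, u, hu, hfa.symm⟩

theorem DenseRange.exists_smul_eq_smul {α G X : Type*} [Group G] [TopologicalSpace G]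
    [SeparatelyContinuousMul G] [MulAction G X] {f : α → G} (hf : DenseRange f)
    (hX : ∀ x : X, IsOpen {g : G | g • x = x}) (σ : G) (x : X) : ∃ a, f a • x = σ • x := by
  obtain ⟨a, u, hu, hfa⟩ := hf.exists_eq_mul_mem (hX x) (one_smul G x) σ
  have hux : u • x = x := hu
  exact ⟨a, by rw [hfa, mul_smul, hux]⟩

theorem smul_eq_smul_of_map_mem_coset_of_denseRange {H₁ H₂ W : Type*} [Group H₁]
    [TopologicalSpace H₁] [SeparatelyContinuousMul H₁] [Group H₂] [MulAction H₂ W]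
    {φ : H₂ →* H₁} (hd : DenseRange φ)
    {U U' : Subgroup H₁} (hU : IsOpen (U : Set H₁)) (hU' : IsOpen (U' : Set H₁)) {w : W}
    (hw : ∀ τ : H₂, φ τ ∈ U → τ • w = w) (hw' : ∀ τ : H₂, φ τ ∈ U' → τ • w = w)
    {σ : H₁} {σ' σ'' : H₂} (h' : ∃ u ∈ U, φ σ' = σ * u) (h'' : ∃ u ∈ U', φ σ'' = σ * u) :
    σ' • w = σ'' • w := by
  obtain ⟨τ, u, ⟨huU, huU'⟩, hτ⟩ :=
    hd.exists_eq_mul_mem (hU.inter hU') ⟨U.one_mem, U'.one_mem⟩ σ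
  calc σ' • w = τ • w := smul_eq_smul_of_map_mem_coset φ hw h' ⟨u, huU, hτ⟩
    _ = σ'' • w := smul_eq_smul_of_map_mem_coset φ hw' ⟨u, huU', hτ⟩ h''

theorem stmt_15_general {H₁ H₂ : Type*} [Group H₁] [TopologicalSpace H₁] [IsTopologicalGroup H₁]
    [Group H₂]
    (φ : H₂ →* H₁) (hd : DenseRange ⇑φ)
    {W : Type*} [MulAction H₂ W]
    {V : Type*} [AddCommGroup V] [DistribMulAction H₁ V]
    (hVsm : ∀ v : V, IsOpen {h : H₁ | h • v = v}) :
    -- well-definedness of the action of `H₁` on `φ_* W`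
    (∀ (U : Subgroup H₁) (w : W), (∀ τ : H₂, φ τ ∈ U → τ • w = w) →
      ∀ (σ : H₁) (σ' σ'' : H₂), (∃ u ∈ U, φ σ' = σ * u) → (∃ u ∈ U, φ σ'' = σ * u) →
        σ' • w = σ'' • w) ∧
    -- existence of the action map on `φ_* W = ⋃_U W^{φ⁻¹(U)}`
    (∃ smul₁ : H₁ → {w : W // ∃ U : Subgroup H₁, IsOpen (U : Set H₁) ∧
        ∀ τ : H₂, φ τ ∈ U → τ • w = w} → W,
      ∀ (σ : H₁) (w : {w : W // ∃ U : Subgroup H₁, IsOpen (U : Set H₁) ∧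
          ∀ τ : H₂, φ τ ∈ U → τ • w = w}) (U : Subgroup H₁), IsOpen (U : Set H₁) →
        (∀ τ : H₂, φ τ ∈ U → τ • (w : W) = (w : W)) →
        ∀ σ' : H₂, (∃ u ∈ U, φ σ' = σ * u) → smul₁ σ w = σ' • (w : W)) ∧
    -- `φ*` preserves irreducibility
    ((∀ S : AddSubgroup V, (∀ (h : H₁) x, x ∈ S → h • x ∈ S) → S = ⊥ ∨ S = ⊤) →
      ∀ S : AddSubgroup V, (∀ (τ : H₂) x, x ∈ S → φ τ • x ∈ S) → S = ⊥ ∨ S = ⊤) := by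
  refine ⟨fun U w hw σ σ' σ'' => smul_eq_smul_of_map_mem_coset φ hw, ?_, ?_⟩
  · have hlift : ∀ (σ : H₁) (U : Subgroup H₁), IsOpen (U : Set H₁) →
        ∃ σ' : H₂, ∃ u ∈ U, φ σ' = σ * u :=
      fun σ U hU => hd.exists_eq_mul_mem hU U.one_mem σ
    choose lift hlift using hlift
    refine ⟨fun σ w => lift σ w.2.choose w.2.choose_spec.1 • (w : W), ?_⟩
    intro σ w U hU hw σ' hσ'
    exact smul_eq_smul_of_map_mem_coset_of_denseRange hd w.2.choose_spec.1 hU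
      w.2.choose_spec.2 hw (hlift _ _ _) hσ'
  · intro hirr S hS
    refine hirr S fun σ x hx => ?_
    obtain ⟨τ, hτ⟩ := hd.exists_smul_eq_smul hVsm σ x
    exact hτ ▸ hS τ x hx

/-- for a continuous homomorphism `φ : H₂ → H₁` with dense image, the
smooth push-forward `φ_* W = ⋃_U W^{φ⁻¹(U)}` carries a well-defined `H₁`-action
`σ • w := σ' • w` for any `σ'` with `φ(σ') ∈ σU`; and `φ*` preserves irreducibility
of smooth representations. -/
theorem stmt_15 {H₁ H₂ : Type*} [Group H₁] [TopologicalSpace H₁] [IsTopologicalGroup H₁]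
    [Group H₂] [TopologicalSpace H₂] [IsTopologicalGroup H₂]
    (φ : H₂ →* H₁) (hc : Continuous ⇑φ) (hd : DenseRange ⇑φ)
    {W : Type*} [MulAction H₂ W]
    (hWsm : ∀ w : W, IsOpen {τ : H₂ | τ • w = w})
    {V : Type*} [AddCommGroup V] [DistribMulAction H₁ V]
    (hVsm : ∀ v : V, IsOpen {h : H₁ | h • v = v}) :
    -- well-definedness of the action of `H₁` on `φ_* W`
    (∀ (U : Subgroup H₁) (w : W), (∀ τ : H₂, φ τ ∈ U → τ • w = w) →
      ∀ (σ : H₁) (σ' σ'' : H₂), (∃ u ∈ U, φ σ' = σ * u) → (∃ u ∈ U, φ σ'' = σ * u) →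
        σ' • w = σ'' • w) ∧
    -- existence of the action map on `φ_* W = ⋃_U W^{φ⁻¹(U)}`
    (∃ smul₁ : H₁ → {w : W // ∃ U : Subgroup H₁, IsOpen (U : Set H₁) ∧
        ∀ τ : H₂, φ τ ∈ U → τ • w = w} → W,
      ∀ (σ : H₁) (w : {w : W // ∃ U : Subgroup H₁, IsOpen (U : Set H₁) ∧
          ∀ τ : H₂, φ τ ∈ U → τ • w = w}) (U : Subgroup H₁), IsOpen (U : Set H₁) →
        (∀ τ : H₂, φ τ ∈ U → τ • (w : W) = (w : W)) →
        ∀ σ' : H₂, (∃ u ∈ U, φ σ' = σ * u) → smul₁ σ w = σ' • (w : W)) ∧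
    -- `φ*` preserves irreducibility
    ((∀ S : AddSubgroup V, (∀ (h : H₁) x, x ∈ S → h • x ∈ S) → S = ⊥ ∨ S = ⊤) →
      ∀ S : AddSubgroup V, (∀ (τ : H₂) x, x ∈ S → φ τ • x ∈ S) → S = ⊥ ∨ S = ⊤) :=
  stmt_15_general φ hd hVsm
end

section
/- Let H be a totally disconnected group with base of open subgroups B, W a smooth representation of H, and U ⊆ H a subgroup. Let {U_α} be a family of subgroups, each containing U, directed downwards and filtering for the neighbourhoods of the identity coset in H/closure(U). Then for cohomology computed by an injective resolution I• of W in the category of smooth representations, the natural map colim_α H^q((I•)^{U_α}) → H^q((I•)^U) is an isomorphism for all q; in particular colim_α H^q_{Sm_H}(U_α, W) ≅ H^q_{Sm_H}(U, W). -/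
/-!
A smooth vector `x` fixed by `U` has an open stabilizer; an open subgroup is closed, so this
stabilizer contains `closure U` and is a neighbourhood of the identity coset of `H / closure U`.
The filtering hypothesis then puts some `U_α` inside it. Hence `(A^n)^U` is the union of the
`(A^n)^{U_α}`, and both surjectivity and injectivity of `colim_α H^q((A•)^{U_α}) → H^q((A•)^U)`
follow by lifting a cocycle, resp. a primitive, to some `U_α`, using directedness for the latter.
-/

open MulAction

theorem exists_le_of_isOpen_of_le {H : Type*} [Group H] [TopologicalSpace H]
    [IsTopologicalGroup H] {U : Subgroup H} {κ : Type*} {Uα : κ → Subgroup H}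
    (hfilter : ∀ V : Set H, IsOpen V → (1 : H) ∈ V →
      (∀ v ∈ V, ∀ u ∈ closure (U : Set H), v * u ∈ V) → ∃ a, (Uα a : Set H) ⊆ V)
    {S : Subgroup H} (hS : IsOpen (S : Set H)) (hUS : U ≤ S) : ∃ a, Uα a ≤ S := by
  have hclosure : closure (U : Set H) ⊆ S := closure_minimal hUS (S.isClosed_of_isOpen hS)
  exact hfilter S hS S.one_mem fun v hv u hu => S.mul_mem hv (hclosure hu)

theorem stmt_17_general {H : Type*} [Group H] [TopologicalSpace H] [IsTopologicalGroup H]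
    {A : ℕ → Type*} [∀ n, AddCommGroup (A n)] [∀ n, DistribMulAction H (A n)]
    (hsm : ∀ n (x : A n), IsOpen {h : H | h • x = x})
    (δ : ∀ n, A n →+ A (n + 1))
    (U : Subgroup H) {κ : Type*} (Uα : κ → Subgroup H)
    (hdir : ∀ a b, ∃ c, Uα c ≤ Uα a ∧ Uα c ≤ Uα b)
    (hfilter : ∀ V : Set H, IsOpen V → (1 : H) ∈ V →
      (∀ v ∈ V, ∀ u ∈ closure (U : Set H), v * u ∈ V) → ∃ a, (Uα a : Set H) ⊆ V) :
    (∀ n (x : A n), (∀ u ∈ U, u • x = x) → ∃ a, ∀ u ∈ Uα a, u • x = x) ∧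
    (∀ q (x : A (q + 1)), (∀ u ∈ U, u • x = x) → δ (q + 1) x = 0 →
      ∃ (a : κ) (y : A (q + 1)), (∀ u ∈ Uα a, u • y = y) ∧ δ (q + 1) y = 0 ∧
        ∃ z : A q, (∀ u ∈ U, u • z = z) ∧ δ q z = x - y) ∧
    (∀ q a (y : A (q + 1)), (∀ u ∈ Uα a, u • y = y) → δ (q + 1) y = 0 →
      (∃ z : A q, (∀ u ∈ U, u • z = z) ∧ δ q z = y) →
      ∃ b, Uα b ≤ Uα a ∧ ∃ z' : A q, (∀ u ∈ Uα b, u • z' = z') ∧ δ q z' = y) := by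
  have fixed_by_some : ∀ n (x : A n), (∀ u ∈ U, u • x = x) → ∃ a, ∀ u ∈ Uα a, u • x = x :=
    fun n x hx => exists_le_of_isOpen_of_le hfilter (S := stabilizer H x) (hsm n x) hx
  refine ⟨fixed_by_some, ?surjective, ?injective⟩
  case surjective =>
    intro q x hx hdx
    obtain ⟨a, ha⟩ := fixed_by_some _ x hx
    exact ⟨a, x, ha, hdx, 0, fun u _ => smul_zero u, by simp⟩
  case injective =>
    rintro q a y - - ⟨z, hz, hdz⟩
    obtain ⟨b, hb⟩ := fixed_by_some _ z hz
    obtain ⟨c, hca, hcb⟩ := hdir a b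
    exact ⟨c, hca, z, fun u hu => hb u (hcb hu), hdz⟩

/-- for a complex `(A•, δ)` of smooth `H`-modules (e.g. an injective
resolution of `W`), a subgroup `U` and a downward-directed family `{U_α}` of subgroups
containing `U` which is filtering for the neighbourhoods of the identity coset of
`H/closure(U)`, one has `(A^n)^U = colim_α (A^n)^{U_α}` and the natural map
`colim_α H^q((A•)^{U_α}) → H^q((A•)^U)` is an isomorphism (the last two clauses are
the surjectivity and injectivity of this map, stated elementwise). -/
theorem stmt_17 {H : Type*} [Group H] [TopologicalSpace H] [IsTopologicalGroup H]
    {A : ℕ → Type*} [∀ n, AddCommGroup (A n)] [∀ n, DistribMulAction H (A n)]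
    (hsm : ∀ n (x : A n), IsOpen {h : H | h • x = x})
    (δ : ∀ n, A n →+ A (n + 1))
    (hδ : ∀ n (h : H) (x : A n), δ n (h • x) = h • δ n x)
    (hδδ : ∀ n (x : A n), δ (n + 1) (δ n x) = 0)
    (U : Subgroup H) {κ : Type*} (Uα : κ → Subgroup H)
    (hUle : ∀ a, U ≤ Uα a)
    (hdir : ∀ a b, ∃ c, Uα c ≤ Uα a ∧ Uα c ≤ Uα b)
    (hfilter : ∀ V : Set H, IsOpen V → (1 : H) ∈ V →
      (∀ v ∈ V, ∀ u ∈ closure (U : Set H), v * u ∈ V) → ∃ a, (Uα a : Set H) ⊆ V) :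
    (∀ n (x : A n), (∀ u ∈ U, u • x = x) → ∃ a, ∀ u ∈ Uα a, u • x = x) ∧
    (∀ q (x : A (q + 1)), (∀ u ∈ U, u • x = x) → δ (q + 1) x = 0 →
      ∃ (a : κ) (y : A (q + 1)), (∀ u ∈ Uα a, u • y = y) ∧ δ (q + 1) y = 0 ∧
        ∃ z : A q, (∀ u ∈ U, u • z = z) ∧ δ q z = x - y) ∧
    (∀ q a (y : A (q + 1)), (∀ u ∈ Uα a, u • y = y) → δ (q + 1) y = 0 →
      (∃ z : A q, (∀ u ∈ U, u • z = z) ∧ δ q z = y) →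
      ∃ b, Uα b ≤ Uα a ∧ ∃ z' : A q, (∀ u ∈ Uα b, u • z' = z') ∧ δ q z' = y) :=
  stmt_17_general hsm δ U Uα hdir hfilter
end
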